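/- Let p = [b_1^{a_1} ⋯ b_r^{a_r}] (b_1 ≥ ⋯ ≥ b_r) be a symplectic partition of 2n with b_1 even, a_1 = 1, and b_i odd for all 2 ≤ i ≤ r. Then with P := [p_1 p_1 (2n*+1)] one has the exact identity P^t = p^+; in particular (P^t)_{SO_{2n+1}} = (p^+)_{SO_{2n+1}}. -/

import Mathlib

namespace JiangWF

/-- `sCount p i` : the number of parts of `p` that are `≥ i`. -/
def sCount (p : Multiset ℕ) (i : ℕ) : ℕ := (p.filter (fun a => i ≤ a)).card

/-- `rCount p i` : the number of parts of `p` equal to `i`. -/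
def rCount (p : Multiset ℕ) (i : ℕ) : ℕ := p.count i

/-- The largest part of `p` (`0` for the empty partition). -/
def maxPart (p : Multiset ℕ) : ℕ := p.sup

/-- The smallest part of `p` (`0` for the empty partition). -/
noncomputable def minPart (p : Multiset ℕ) : ℕ := sInf {a : ℕ | a ∈ p}

/-- The transpose partition: its `i`-th part is `sCount p i`, for `1 ≤ i ≤ maxPart p`. -/
def transpose (p : Multiset ℕ) : Multiset ℕ :=
  (Multiset.range (maxPart p)).map fun i => sCount p (i + 1)

/-- The sum of the `m` largest parts of `p`. -/
def topSum (p : Multiset ℕ) (m : ℕ) : ℕ :=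
  ∑ i ∈ Finset.Icc 1 p.sum, min m (sCount p i)

/-- Dominance order: `domLE p q` means `p ≤ q`. -/
def domLE (p q : Multiset ℕ) : Prop := ∀ m, topSum p m ≤ topSum q m

/-- `p` is a partition of `N`: all parts positive, summing to `N`. -/
def IsPartitionOf (p : Multiset ℕ) (N : ℕ) : Prop := (∀ a ∈ p, 0 < a) ∧ p.sum = N

/-- Symplectic partition: every odd part occurs with even multiplicity. -/
def IsSymplectic (p : Multiset ℕ) : Prop := ∀ a, a % 2 = 1 → Even (p.count a)

/-- Orthogonal partition: every even part occurs with even multiplicity. -/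
def IsOrthogonal (p : Multiset ℕ) : Prop := ∀ a, a % 2 = 0 → Even (p.count a)

/-- `p^-`: decrease the smallest part by one (deleting it if it becomes `0`). -/
noncomputable def pMinus (p : Multiset ℕ) : Multiset ℕ :=
  if minPart p ≤ 1 then p.erase (minPart p)
  else (minPart p - 1) ::ₘ p.erase (minPart p)

/-- `p^+`: increase the largest part by one. -/
def pPlus (p : Multiset ℕ) : Multiset ℕ := (maxPart p + 1) ::ₘ p.erase (maxPart p)

/-- `p^{+-}`: increase the largest part by one and decrease the smallest by one. -/
noncomputable def pPM (p : Multiset ℕ) : Multiset ℕ := pMinus (pPlus p)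

/-- `p₁ = [⌊b_1/2⌋^{a_1} ⋯ ⌊b_r/2⌋^{a_r}]^t` (discarding zero entries before transposing). -/
def pOne (p : Multiset ℕ) : Multiset ℕ :=
  transpose ((p.map fun b => b / 2).filter fun x => 0 < x)

/-- `Σ_{i : b_i odd} a_i`: the number of odd parts of `p`. -/
def oddMult (p : Multiset ℕ) : ℕ := (p.filter fun a => a % 2 = 1).card

/-- `n* = ⌊(Σ_{i : b_i odd} a_i)/2⌋`. -/
def nStar (p : Multiset ℕ) : ℕ := oddMult p / 2

/-- Append an extra part `m` to `q`, omitted if `m = 0`. -/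
def addPart (m : ℕ) (q : Multiset ℕ) : Multiset ℕ := if m = 0 then q else m ::ₘ q

/-- `c` is the `Sp`-collapse of `p`: the maximal symplectic partition `≤ p` in dominance. -/
def IsSpCollapse (p c : Multiset ℕ) : Prop :=
  IsPartitionOf c p.sum ∧ IsSymplectic c ∧ domLE c p ∧
    ∀ c', IsPartitionOf c' p.sum → IsSymplectic c' → domLE c' p → domLE c' c

/-- `c` is the `SO`-collapse of `p`: the maximal orthogonal partition `≤ p` in dominance. -/
def IsSOCollapse (p c : Multiset ℕ) : Prop :=
  IsPartitionOf c p.sum ∧ IsOrthogonal c ∧ domLE c p ∧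
    ∀ c', IsPartitionOf c' p.sum → IsOrthogonal c' → domLE c' p → domLE c' c

/-- `e` is the `Sp`-expansion of `p`: the minimal special symplectic partition `≥ p`. -/
def IsSpExpansion (p e : Multiset ℕ) : Prop :=
  IsPartitionOf e p.sum ∧ IsSymplectic e ∧ IsSymplectic (transpose e) ∧ domLE p e ∧
    ∀ e', IsPartitionOf e' p.sum → IsSymplectic e' → IsSymplectic (transpose e') →
      domLE p e' → domLE e e'

/-- `e` is the `SO_{2n+1}`-expansion of `p`: the minimal special orthogonal partition `≥ p`
(odd case: special means the transpose is orthogonal). -/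
def IsSOOddExpansion (p e : Multiset ℕ) : Prop :=
  IsPartitionOf e p.sum ∧ IsOrthogonal e ∧ IsOrthogonal (transpose e) ∧ domLE p e ∧
    ∀ e', IsPartitionOf e' p.sum → IsOrthogonal e' → IsOrthogonal (transpose e') →
      domLE p e' → domLE e e'

/-- `e` is the `SO_{2n}`-expansion of `p`: the minimal special orthogonal partition `≥ p`
(even case: special means the transpose is symplectic). -/
def IsSOEvenExpansion (p e : Multiset ℕ) : Prop :=
  IsPartitionOf e p.sum ∧ IsOrthogonal e ∧ IsSymplectic (transpose e) ∧ domLE p e ∧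
    ∀ e', IsPartitionOf e' p.sum → IsOrthogonal e' → IsSymplectic (transpose e') →
      domLE p e' → domLE e e'

/-- `dim_C(q)` for a symplectic partition `q` of `2k`:
`2k² + k − (1/2)Σ s_i(q)² − (1/2)Σ_{i odd} r_i(q)` (note `2k² + k = (|q|² + |q|)/2`). -/
def dimC (p : Multiset ℕ) : ℚ :=
  ((p.sum : ℚ) ^ 2 + (p.sum : ℚ)) / 2
    - (∑ i ∈ Finset.Icc 1 p.sum, (sCount p i : ℚ) ^ 2) / 2
    - (∑ i ∈ Finset.Icc 1 p.sum, if i % 2 = 1 then (rCount p i : ℚ) else 0) / 2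

/-- `dim_B(q)` for an orthogonal partition `q` of `2k+1`:
`2k² + k − (1/2)Σ s_i(q)² + (1/2)Σ_{i odd} r_i(q)` (note `2k² + k = (|q|² − |q|)/2`). -/
def dimB (p : Multiset ℕ) : ℚ :=
  ((p.sum : ℚ) ^ 2 - (p.sum : ℚ)) / 2
    - (∑ i ∈ Finset.Icc 1 p.sum, (sCount p i : ℚ) ^ 2) / 2
    + (∑ i ∈ Finset.Icc 1 p.sum, if i % 2 = 1 then (rCount p i : ℚ) else 0) / 2

/-- `dim_D(q)` for an orthogonal partition `q` of `2k`:
`2k² − k − (1/2)Σ s_i(q)² + (1/2)Σ_{i odd} r_i(q)` (note `2k² − k = (|q|² − |q|)/2`). -/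
def dimD (p : Multiset ℕ) : ℚ :=
  ((p.sum : ℚ) ^ 2 - (p.sum : ℚ)) / 2
    - (∑ i ∈ Finset.Icc 1 p.sum, (sCount p i : ℚ) ^ 2) / 2
    + (∑ i ∈ Finset.Icc 1 p.sum, if i % 2 = 1 then (rCount p i : ℚ) else 0) / 2

/-!
Write `p = [2m q]` with `q` the `2K = 2n*` odd parts. By the duality `i ≤ s_j(λ^t) ↔ j ≤ s_i(λ)`
it suffices to show, for `i, j ≥ 1`, that `j ≤ s_i(P) = [i ≤ 2K+1] + 2 s_i(p₁)` iff
`i ≤ s_j(p^+) = [j ≤ 2m+1] + s_j(q)`. Duality again gives `t ≤ s_i(p₁)` iff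
`i ≤ s_{2t}(p) = [t ≤ m] + s_{2t}(q)`, and since the parts of `q` are odd,
`s_{2t}(q) = s_{2t+1}(q)`; with `t = ⌊j/2⌋` the two conditions agree.

The collapse statement follows from antisymmetry of the dominance order: the increments of
`m ↦ topSum λ m` are the columns of `λ^t`, and transposition is an involution.
-/

lemma sCount_cons (a : ℕ) (p : Multiset ℕ) (i : ℕ) :
    sCount (a ::ₘ p) i = (if i ≤ a then 1 else 0) + sCount p i := by
  unfold sCount
  split_ifs with h <;> simp [h, add_comm]

lemma sCount_add (p q : Multiset ℕ) (i : ℕ) : sCount (p + q) i = sCount p i + sCount q i := by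
  simp only [sCount, Multiset.filter_add, Multiset.card_add]

lemma sCount_le_card (p : Multiset ℕ) (i : ℕ) : sCount p i ≤ Multiset.card p :=
  Multiset.card_le_card (Multiset.filter_le _ p)

lemma sCount_antitone (p : Multiset ℕ) : Antitone (sCount p) := fun _ _ hij =>
  Multiset.card_le_card (Multiset.monotone_filter_right p fun _ h => hij.trans h)

lemma count_add_sCount_succ (p : Multiset ℕ) (v : ℕ) :
    p.count v + sCount p (v + 1) = sCount p v := by
  induction p using Multiset.induction_on with
  | empty => simp [sCount]
  | cons a s ih =>
    rw [sCount_cons, sCount_cons, Multiset.count_cons]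
    split_ifs <;> omega

lemma le_maxPart_of_sCount_pos {p : Multiset ℕ} {i : ℕ} (h : 0 < sCount p i) :
    i ≤ maxPart p := by
  obtain ⟨a, ha⟩ := Multiset.card_pos_iff_exists_mem.1 h
  rw [Multiset.mem_filter] at ha
  exact ha.2.trans (Multiset.le_sup ha.1)

lemma sCount_pos_of_lt_maxPart {p : Multiset ℕ} {k : ℕ} (h : k < maxPart p) :
    0 < sCount p (k + 1) := by
  obtain ⟨a, ha, hka⟩ : ∃ a ∈ p, k < a := by
    by_contra! hle
    exact h.not_ge (Multiset.sup_le.2 hle)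
  exact Multiset.card_pos_iff_exists_mem.2 ⟨a, Multiset.mem_filter.2 ⟨ha, hka⟩⟩

lemma eq_of_sCount_eq {p q : Multiset ℕ} (hp : ∀ a ∈ p, 0 < a) (hq : ∀ a ∈ q, 0 < a)
    (h : ∀ i, 1 ≤ i → sCount p i = sCount q i) : p = q := by
  ext v
  rcases Nat.eq_zero_or_pos v with rfl | hv
  · rw [Multiset.count_eq_zero_of_notMem fun h => (hp 0 h).false,
      Multiset.count_eq_zero_of_notMem fun h => (hq 0 h).false]
  · have := count_add_sCount_succ p v
    have := count_add_sCount_succ q v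
    have := h v hv
    have := h (v + 1) (by omega)
    omega

lemma sCount_transpose (p : Multiset ℕ) (j : ℕ) :
    sCount (transpose p) j =
      ((Finset.range (maxPart p)).filter fun k => j ≤ sCount p (k + 1)).card := by
  rw [transpose, sCount, ← Multiset.countP_eq_card_filter, Multiset.countP_map]
  rfl

/-- The box `(j, i)` lies in the Young diagram of `p` iff `(i, j)` lies in that of its
transpose. -/
lemma le_sCount_transpose_iff {p : Multiset ℕ} {i j : ℕ} (hi : 1 ≤ i) (hj : 1 ≤ j) :
    i ≤ sCount (transpose p) j ↔ j ≤ sCount p i := by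
  rw [sCount_transpose]
  constructor
  · intro h
    by_contra! hlt
    have hsub : (Finset.range (maxPart p)).filter (fun k => j ≤ sCount p (k + 1)) ⊆
        Finset.range (i - 1) := fun k hk => by
      rw [Finset.mem_filter] at hk
      rw [Finset.mem_range]
      by_contra! hik
      have := sCount_antitone p (show i ≤ k + 1 by omega)
      omega
    have := Finset.card_le_card hsub
    rw [Finset.card_range] at this
    omega
  · intro h
    have hiM : i ≤ maxPart p := le_maxPart_of_sCount_pos (by omega)
    calc i = (Finset.range i).card := (Finset.card_range i).symm
      _ ≤ _ := Finset.card_le_card fun k hk => by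
        rw [Finset.mem_range] at hk
        rw [Finset.mem_filter, Finset.mem_range]
        exact ⟨by omega, h.trans (sCount_antitone p (by omega))⟩

lemma pos_of_mem_transpose {p : Multiset ℕ} {a : ℕ} (ha : a ∈ transpose p) : 0 < a := by
  obtain ⟨k, hk, rfl⟩ := Multiset.mem_map.1 ha
  exact sCount_pos_of_lt_maxPart (Multiset.mem_range.1 hk)

lemma transpose_eq_of_le_sCount_iff {p q : Multiset ℕ} (hq : ∀ a ∈ q, 0 < a)
    (h : ∀ i j, 1 ≤ i → 1 ≤ j → (j ≤ sCount p i ↔ i ≤ sCount q j)) :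
    transpose p = q := by
  refine eq_of_sCount_eq (fun _ => pos_of_mem_transpose) hq fun j hj => ?_
  refine eq_of_forall_le_iff fun i => ?_
  rcases Nat.eq_zero_or_pos i with rfl | hi
  · simp
  · rw [le_sCount_transpose_iff hi hj, h i j hi hj]

lemma transpose_transpose {p : Multiset ℕ} (hp : ∀ a ∈ p, 0 < a) :
    transpose (transpose p) = p :=
  transpose_eq_of_le_sCount_iff hp fun _ _ hi hj => le_sCount_transpose_iff hj hi

/-- The increment is the `(m+1)`-st largest part of `p`, which is a column of the transpose. -/
lemma topSum_succ (p : Multiset ℕ) (m : ℕ) :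
    topSum p (m + 1) = topSum p m + sCount (transpose p) (m + 1) := by
  have hcard : ((Finset.Icc 1 p.sum).filter (m + 1 ≤ sCount p ·)).card
      = sCount (transpose p) (m + 1) := by
    have hle : sCount (transpose p) (m + 1) ≤ p.sum := by
      refine (sCount_le_card _ _).trans ?_
      rw [transpose, Multiset.card_map, Multiset.card_range]
      exact Multiset.sup_le.2 fun a ha => Multiset.le_sum_of_mem ha
    calc _ = (Finset.Icc 1 (sCount (transpose p) (m + 1))).card := by
          congr 1
          ext i
          simp only [Finset.mem_filter, Finset.mem_Icc]
          constructor
          · rintro ⟨⟨hi, -⟩, h⟩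
            exact ⟨hi, (le_sCount_transpose_iff hi (by omega)).2 h⟩
          · rintro ⟨hi, h⟩
            exact ⟨⟨hi, h.trans hle⟩, (le_sCount_transpose_iff hi (by omega)).1 h⟩
      _ = _ := by simp
  rw [← hcard, Finset.card_filter, topSum, topSum, ← Finset.sum_add_distrib]
  refine Finset.sum_congr rfl fun i _ => ?_
  split_ifs <;> omega

lemma domLE_antisymm {p q : Multiset ℕ} (hp : ∀ a ∈ p, 0 < a) (hq : ∀ a ∈ q, 0 < a)
    (hpq : domLE p q) (hqp : domLE q p) : p = q := by
  have htop : ∀ m, topSum p m = topSum q m := fun m => (hpq m).antisymm (hqp m)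
  have hcol : transpose p = transpose q := by
    refine eq_of_sCount_eq (fun _ => pos_of_mem_transpose) (fun _ => pos_of_mem_transpose)
      fun j hj => ?_
    obtain ⟨m, rfl⟩ : ∃ m, j = m + 1 := ⟨j - 1, by omega⟩
    have := topSum_succ p m
    have := topSum_succ q m
    have := htop m
    have := htop (m + 1)
    omega
  rw [← transpose_transpose hp, hcol, transpose_transpose hq]

lemma IsSOCollapse.unique {p c₁ c₂ : Multiset ℕ} (h₁ : IsSOCollapse p c₁)
    (h₂ : IsSOCollapse p c₂) : c₁ = c₂ :=
  domLE_antisymm h₁.1.1 h₂.1.1 (h₂.2.2.2 c₁ h₁.1 h₁.2.1 h₁.2.2.1)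
    (h₁.2.2.2 c₂ h₂.1 h₂.2.1 h₂.2.2.1)

lemma even_oddMult {p : Multiset ℕ} (hp : IsSymplectic p) : Even (oddMult p) := by
  rw [oddMult, ← Multiset.toFinset_sum_count_eq]
  refine Finset.even_sum _ fun a _ => ?_
  rw [Multiset.count_filter]
  split_ifs with ha
  · exact hp a ha
  · exact ⟨0, rfl⟩

lemma le_sCount_pOne_iff (p : Multiset ℕ) {i t : ℕ} (hi : 1 ≤ i) (ht : 1 ≤ t) :
    t ≤ sCount (pOne p) i ↔ i ≤ sCount p (2 * t) := by
  rw [pOne, le_sCount_transpose_iff ht hi, sCount, sCount, Multiset.filter_filter,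
    ← Multiset.countP_eq_card_filter, Multiset.countP_map]
  congr! 2
  refine Multiset.filter_congr fun a _ => ?_
  omega

theorem transpose_cons_pOne_add_pOne (q : Multiset ℕ) (m K : ℕ)
    (hodd : ∀ a ∈ q, a % 2 = 1) (hK : Multiset.card q = 2 * K) :
    transpose ((2 * K + 1) ::ₘ (pOne (2 * m ::ₘ q) + pOne (2 * m ::ₘ q))) =
      (2 * m + 1) ::ₘ q := by
  have hc_le : ∀ i, sCount q i ≤ 2 * K := hK ▸ sCount_le_card q
  have hc_one : sCount q 1 = 2 * K := by
    rw [← hK, sCount, Multiset.filter_eq_self.2 fun a ha => by have := hodd a ha; omega]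
  have hc_half : ∀ j, sCount q j = sCount q (2 * (j / 2)) := fun j => by
    rw [sCount, sCount]
    congr 1
    refine Multiset.filter_congr fun a ha => ?_
    have := hodd a ha
    omega
  have hpOne : ∀ i t, 1 ≤ i → 1 ≤ t →
      (t ≤ sCount (pOne (2 * m ::ₘ q)) i ↔
        i ≤ (if t ≤ m then 1 else 0) + sCount q (2 * t)) := by
    intro i t hi ht
    rw [le_sCount_pOne_iff _ hi ht, sCount_cons]
    simp only [Nat.mul_le_mul_left_iff two_pos]
  refine transpose_eq_of_le_sCount_iff ?_ fun i j hi hj => ?_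
  · intro a ha
    rcases Multiset.mem_cons.1 ha with rfl | ha
    · omega
    · have := hodd a ha
      omega
  rw [sCount_cons, sCount_add, sCount_cons]
  set s := sCount (pOne (2 * m ::ₘ q)) i
  by_cases hiK : i ≤ 2 * K + 1
  · rcases Nat.lt_or_ge j 2 with hj1 | hj2
    · obtain rfl : j = 1 := by omega
      have := hc_le 1
      simp only [if_pos hiK, if_pos (by omega : 1 ≤ 2 * m + 1)]
      omega
    · -- `j ≤ 1 + 2 s ↔ j / 2 ≤ s`, which `hpOne` decodes
      have hst := hpOne i (j / 2) hi (by omega)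
      rw [hc_half j, if_pos hiK]
      split_ifs at hst ⊢ <;> omega
  · have hs : s = 0 := by
      by_contra hs
      have h1 := (hpOne i 1 hi le_rfl).1 (by omega)
      have := hc_le (2 * 1)
      split_ifs at h1 <;> omega
    have := hc_le j
    rw [hs, if_neg hiK]
    split_ifs <;> omega

theorem transpose_eq_pPlus_mixed_general (p : Multiset ℕ) (hsymp : IsSymplectic p)
    (hb1 : maxPart p % 2 = 0) (ha1 : p.count (maxPart p) = 1)
    (hodd : ∀ a ∈ p, a ≠ maxPart p → a % 2 = 1) :
    transpose ((2 * nStar p + 1) ::ₘ (pOne p + pOne p)) = pPlus p ∧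
      ∀ c₁ c₂ : Multiset ℕ,
        IsSOCollapse (transpose ((2 * nStar p + 1) ::ₘ (pOne p + pOne p))) c₁ →
        IsSOCollapse (pPlus p) c₂ → c₁ = c₂ := by
  have hmem : maxPart p ∈ p := Multiset.count_pos.1 (by omega)
  obtain ⟨m, hm⟩ : ∃ m, maxPart p = 2 * m := ⟨maxPart p / 2, by omega⟩
  set q := p.erase (maxPart p) with hq
  have hpq : p = 2 * m ::ₘ q := hm ▸ (Multiset.cons_erase hmem).symm
  have hpPlus : pPlus p = (2 * m + 1) ::ₘ q := by rw [pPlus, hq, hm]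
  have hqodd : ∀ a ∈ q, a % 2 = 1 := fun a ha =>
    hodd a (Multiset.mem_of_mem_erase ha) fun h => by
      rw [hq, h, ← Multiset.count_pos, Multiset.count_erase_self, ha1] at ha
      exact ha.false
  have hcard : Multiset.card q = 2 * nStar p := by
    have : oddMult p = Multiset.card q := by
      rw [oddMult, hpq, Multiset.filter_cons_of_neg _ (by omega), Multiset.filter_eq_self.2 hqodd]
    rw [nStar, this, Nat.mul_div_cancel' (this ▸ even_oddMult hsymp).two_dvd]
  have hP := transpose_cons_pOne_add_pOne q m (nStar p) hqodd hcard
  rw [← hpq, ← hpPlus] at hP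
  exact ⟨hP, fun c₁ c₂ h₁ h₂ => (hP ▸ h₁).unique h₂⟩

/-- `p` a symplectic partition of `2n` whose largest part `b₁` is even and
occurs once (`a₁ = 1`), all other parts being odd.  Then `P = [p₁ p₁ (2n*+1)]` satisfies
`P^t = p^+`; in particular `(P^t)_{SO_{2n+1}} = (p^+)_{SO_{2n+1}}`. -/
theorem transpose_eq_pPlus_mixed (n : ℕ) (p : Multiset ℕ) (hne : p ≠ 0)
    (hp : IsPartitionOf p (2 * n)) (hsymp : IsSymplectic p)
    (hb1 : maxPart p % 2 = 0) (ha1 : p.count (maxPart p) = 1)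
    (hodd : ∀ a ∈ p, a ≠ maxPart p → a % 2 = 1) :
    transpose ((2 * nStar p + 1) ::ₘ (pOne p + pOne p)) = pPlus p ∧
      ∀ c₁ c₂ : Multiset ℕ,
        IsSOCollapse (transpose ((2 * nStar p + 1) ::ₘ (pOne p + pOne p))) c₁ →
        IsSOCollapse (pPlus p) c₂ → c₁ = c₂ :=
  transpose_eq_pPlus_mixed_general p hsymp hb1 ha1 hodd

end JiangWF
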